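/- arXiv:2507.06010 — 3 statements merged into one kernel-verified Lean document; each statement's English description precedes it below -/
import Mathlib

section
/- Quantum Ingster–Suslina identity: Let σ be a nonsingular density matrix on ℂ^d, let (ρ_θ) be a family of density matrices parameterized by a random variable θ taking finitely many values, and let n ≥ 1. Then D_{χ²}(E_θ[ρ_θ^{⊗n}] ‖ σ^{⊗n}) = E_{θ,θ'}[tr(σ⁻¹ ρ_θ ρ_{θ'})^n] − 1, where θ' is an independent copy of θ. -/
open Matrix
open scoped ComplexOrder

/-- The `n`-fold tensor (Kronecker) power of a matrix, indexed by `Fin n → Fin d`. -/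
noncomputable def tensorPow {d : ℕ} (A : Matrix (Fin d) (Fin d) ℂ) (n : ℕ) :
    Matrix (Fin n → Fin d) (Fin n → Fin d) ℂ :=
  Matrix.of fun x y => ∏ i, A (x i) (y i)


lemma tensorPow_mul {d n : ℕ} (A B : Matrix (Fin d) (Fin d) ℂ) :
    tensorPow A n * tensorPow B n = tensorPow (A * B) n := by
  ext x y
  simp only [tensorPow, Matrix.mul_apply, Matrix.of_apply]
  rw [Finset.prod_univ_sum, Fintype.piFinset_univ]
  exact Finset.sum_congr rfl fun z _ => by rw [Finset.prod_mul_distrib]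

lemma tensorPow_one {d n : ℕ} : tensorPow (1 : Matrix (Fin d) (Fin d) ℂ) n = 1 := by
  ext x y
  simp only [tensorPow, Matrix.of_apply, Matrix.one_apply]
  by_cases h : x = y
  · simp [h]
  · obtain ⟨i, hi⟩ := Function.ne_iff.mp h
    rw [if_neg h]
    exact Finset.prod_eq_zero (Finset.mem_univ i) (by simp [hi])

lemma trace_tensorPow {d n : ℕ} (A : Matrix (Fin d) (Fin d) ℂ) :
    (tensorPow A n).trace = A.trace ^ n := by
  simp only [Matrix.trace, Matrix.diag, tensorPow, Matrix.of_apply]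
  calc ∑ x : Fin n → Fin d, ∏ i, A (x i) (x i)
      = ∏ _i : Fin n, ∑ j, A j j := by
        rw [Finset.prod_univ_sum, Fintype.piFinset_univ]
    _ = (∑ j, A j j) ^ n := by
        rw [Finset.prod_const, Finset.card_univ, Fintype.card_fin]

/-- quantum Ingster–Suslina identity:
`D_{χ²}(E_θ[ρ_θ^{⊗n}] ‖ σ^{⊗n}) = E_{θ,θ'}[tr(σ⁻¹ ρ_θ ρ_{θ'})^n] − 1`,
where `D_{χ²}(A‖B) = tr(B⁻¹ A²) − 1` and `θ` ranges over a finite probability space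
with weights `p`. -/
theorem quantum_ingster_suslina_identity {d m : ℕ} (n : ℕ) (hn : 1 ≤ n)
    (σ : Matrix (Fin d) (Fin d) ℂ) (hσ : σ.PosDef) (hσtr : σ.trace = 1)
    (ρ : Fin m → Matrix (Fin d) (Fin d) ℂ)
    (hρ : ∀ t, (ρ t).PosSemidef) (hρtr : ∀ t, (ρ t).trace = 1)
    (p : Fin m → ℝ) (hp : ∀ t, 0 ≤ p t) (hps : ∑ t, p t = 1) :
    ((tensorPow σ n)⁻¹ *
        ((∑ t, (p t : ℂ) • tensorPow (ρ t) n) * (∑ t, (p t : ℂ) • tensorPow (ρ t) n))).trace - 1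
      = (∑ t, ∑ t', ((p t : ℂ) * (p t' : ℂ)) * ((σ⁻¹ * (ρ t * ρ t')).trace) ^ n) - 1 := by
  have hinv : (tensorPow σ n)⁻¹ = tensorPow σ⁻¹ n :=
    Matrix.inv_eq_left_inv (by
      rw [tensorPow_mul, Matrix.nonsing_inv_mul _ (isUnit_iff_ne_zero.mpr hσ.det_pos.ne'), tensorPow_one])
  congr 1
  rw [hinv]
  simp only [Finset.sum_mul, Finset.mul_sum, Matrix.trace_sum, Matrix.smul_mul,
    Matrix.mul_smul, Matrix.trace_smul, smul_smul, smul_eq_mul]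
  rw [Finset.sum_comm]
  refine Finset.sum_congr rfl fun t _ => Finset.sum_congr rfl fun t' _ => ?_
  rw [tensorPow_mul, tensorPow_mul, trace_tensorPow]
  ring
end

section
/- Let σ be a positive definite d×d Hermitian matrix with ‖σ⁻¹‖₂ = 1, and let Σ be a Hermitian d×d matrix with ‖Σ‖_op ≤ 1. Define f : U(d)×U(d) → ℝ by f(U,V) = Re tr(σ⁻¹ · UΣU† · VΣV†). Then for all unitary U, U', V: |f(U,V) − f(U',V)| ≤ 2‖U − U'‖₂, and consequently f is 4-Lipschitz with respect to the L₂-sum of Hilbert–Schmidt metrics on U(d)×U(d). -/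
open Matrix
open scoped ComplexOrder

/-- The Frobenius (Hilbert–Schmidt) norm of a complex matrix. -/
noncomputable def frobNorm {m n : Type*} [Fintype m] [Fintype n]
    (A : Matrix m n ℂ) : ℝ :=
  Real.sqrt (∑ i, ∑ j, ‖A i j‖ ^ 2)

/-- The Euclidean (ℓ²) norm of a complex vector. -/
noncomputable def l2Norm {n : Type*} [Fintype n] (v : n → ℂ) : ℝ :=
  Real.sqrt (∑ i, ‖v i‖ ^ 2)

/-!
Write `f(U, V) = Re tr(σ⁻¹ · UΣU† · VΣV†)`. The difference `f(U, V) − f(U', V)` is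
`Re tr(σ⁻¹ (UΣU† − U'ΣU'†) VΣV†)`, which Hölder bounds by
`‖σ⁻¹‖₂ ‖UΣU† − U'ΣU'†‖₂ ‖VΣV†‖_op`. Splitting
`UΣU† − U'ΣU'† = (U − U')ΣU† + U'Σ(U − U')†` and using `‖AB‖₂ ≤ ‖A‖_op ‖B‖₂` on either side,
with unitary factors of operator norm one, gives `‖UΣU† − U'ΣU'†‖₂ ≤ 2‖Σ‖_op ‖U − U'‖₂`.
The same bound in the second variable and the triangle inequality give the joint estimate
`2a + 2b ≤ 4√(a² + b²)`.
-/

open scoped Matrix.Norms.L2Operator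

section FrobeniusNorm

variable {l m n : Type*} [Fintype l] [Fintype m] [Fintype n]

lemma frobNorm_nonneg (A : Matrix m n ℂ) : 0 ≤ frobNorm A := Real.sqrt_nonneg _

lemma l2Norm_eq_norm (v : n → ℂ) : l2Norm v = ‖(EuclideanSpace.equiv n ℂ).symm v‖ := by
  simp [l2Norm, EuclideanSpace.norm_eq]

lemma sq_frobNorm_eq_sum_sq_l2Norm_col (A : Matrix m n ℂ) :
    frobNorm A ^ 2 = ∑ j, l2Norm (Aᵀ j) ^ 2 := by
  simp only [frobNorm, l2Norm, transpose_apply]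
  rw [Real.sq_sqrt (by positivity), Finset.sum_comm]
  exact Finset.sum_congr rfl fun j _ => (Real.sq_sqrt (by positivity)).symm

lemma frobNorm_conjTranspose (A : Matrix m n ℂ) : frobNorm Aᴴ = frobNorm A := by
  simp only [frobNorm, conjTranspose_apply, norm_star]
  rw [Finset.sum_comm]

lemma frobNorm_transpose (A : Matrix m n ℂ) : frobNorm Aᵀ = frobNorm A := by
  simp only [frobNorm, transpose_apply]
  rw [Finset.sum_comm]

lemma frobNorm_eq_l2Norm_vec (A : Matrix m n ℂ) : frobNorm A = l2Norm A.vec := by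
  simp only [frobNorm, l2Norm, vec, Fintype.sum_prod_type]
  rw [Finset.sum_comm]

lemma l2Norm_add_le (v w : n → ℂ) : l2Norm (v + w) ≤ l2Norm v + l2Norm w := by
  simpa only [l2Norm_eq_norm, map_add] using norm_add_le _ _

lemma norm_dotProduct_le (v w : n → ℂ) : ‖v ⬝ᵥ w‖ ≤ l2Norm v * l2Norm w :=
  calc ‖v ⬝ᵥ w‖ ≤ ∑ i, ‖v i‖ * ‖w i‖ := (norm_sum_le _ _).trans_eq (by simp only [norm_mul])
    _ ≤ l2Norm v * l2Norm w := Real.sum_mul_le_sqrt_mul_sqrt _ _ _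

lemma frobNorm_add_le (A B : Matrix m n ℂ) : frobNorm (A + B) ≤ frobNorm A + frobNorm B := by
  simpa only [frobNorm_eq_l2Norm_vec, vec_add] using l2Norm_add_le A.vec B.vec

lemma abs_re_trace_mul_le (A : Matrix m n ℂ) (B : Matrix n m ℂ) :
    |(A * B).trace.re| ≤ frobNorm A * frobNorm B := by
  have htr : (A * B).trace = Aᵀ.vec ⬝ᵥ B.vec := by
    rw [vec_dotProduct_vec, transpose_transpose]
  calc |(A * B).trace.re| ≤ ‖(A * B).trace‖ := Complex.abs_re_le_norm _
    _ ≤ frobNorm Aᵀ * frobNorm B := by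
      rw [htr, frobNorm_eq_l2Norm_vec, frobNorm_eq_l2Norm_vec]
      exact norm_dotProduct_le _ _
    _ = frobNorm A * frobNorm B := by rw [frobNorm_transpose]

lemma frobNorm_mul_le_norm_mul [DecidableEq m] (A : Matrix l m ℂ) (B : Matrix m n ℂ) :
    frobNorm (A * B) ≤ ‖A‖ * frobNorm B := by
  have hcol : ∀ j, l2Norm ((A * B)ᵀ j) ≤ ‖A‖ * l2Norm (Bᵀ j) := fun j => by
    rw [transpose_mul, mul_apply_eq_vecMul, vecMul_transpose, l2Norm_eq_norm, l2Norm_eq_norm]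
    exact l2_opNorm_mulVec A _
  have hsq : frobNorm (A * B) ^ 2 ≤ (‖A‖ * frobNorm B) ^ 2 := by
    rw [mul_pow, sq_frobNorm_eq_sum_sq_l2Norm_col, sq_frobNorm_eq_sum_sq_l2Norm_col,
      Finset.mul_sum]
    refine Finset.sum_le_sum fun j _ => ?_
    rw [← mul_pow]
    exact pow_le_pow_left₀ (Real.sqrt_nonneg _) (hcol j) 2
  exact le_of_sq_le_sq hsq (mul_nonneg (norm_nonneg _) (frobNorm_nonneg _))

lemma frobNorm_mul_le_mul_norm [DecidableEq n] (A : Matrix l m ℂ) (B : Matrix m n ℂ) :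
    frobNorm (A * B) ≤ frobNorm A * ‖B‖ := by
  classical
  rw [← frobNorm_conjTranspose, conjTranspose_mul, ← frobNorm_conjTranspose A, mul_comm,
    ← l2_opNorm_conjTranspose B]
  exact frobNorm_mul_le_norm_mul _ _

lemma norm_le_one_of_l2Norm_mulVec_le [DecidableEq n] {A : Matrix m n ℂ}
    (hA : ∀ v, l2Norm (A *ᵥ v) ≤ l2Norm v) : ‖A‖ ≤ 1 := by
  rw [l2_opNorm_def]
  refine ContinuousLinearMap.opNorm_le_bound _ zero_le_one fun v => ?_
  simpa [l2Norm_eq_norm, toLpLin_apply] using hA v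

end FrobeniusNorm

section UnitaryConjugation

variable {n : Type*} [Fintype n] [DecidableEq n] {S W W' : Matrix n n ℂ}

lemma norm_conj_of_mem_unitary (hW : W ∈ unitaryGroup n ℂ) : ‖W * S * star W‖ = ‖S‖ := by
  rw [CStarRing.norm_mul_mem_unitary _ (Unitary.star_mem hW), CStarRing.norm_mem_unitary_mul _ hW]

lemma frobNorm_conj_sub_conj_le (hW : W ∈ unitaryGroup n ℂ) (hW' : W' ∈ unitaryGroup n ℂ) :
    frobNorm (W * S * star W - W' * S * star W') ≤ 2 * ‖S‖ * frobNorm (W - W') := by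
  have hsplit : W * S * star W - W' * S * star W'
      = (W - W') * (S * star W) + W' * S * star (W - W') := by
    rw [star_sub]; noncomm_ring
  calc frobNorm (W * S * star W - W' * S * star W')
      ≤ frobNorm (W - W') * ‖S * star W‖ + ‖W' * S‖ * frobNorm (star (W - W')) := by
        rw [hsplit]
        exact (frobNorm_add_le _ _).trans
          (add_le_add (frobNorm_mul_le_mul_norm _ _) (frobNorm_mul_le_norm_mul _ _))
    _ = 2 * ‖S‖ * frobNorm (W - W') := by
      rw [CStarRing.norm_mul_mem_unitary _ (Unitary.star_mem hW),
        CStarRing.norm_mem_unitary_mul _ hW', star_eq_conjTranspose, frobNorm_conjTranspose]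
      ring

noncomputable def traceConjPairRe (P S U V : Matrix n n ℂ) : ℝ :=
  (P * (U * S * star U) * (V * S * star V)).trace.re

variable (P : Matrix n n ℂ) {U U' V V' : Matrix n n ℂ}

lemma abs_traceConjPairRe_sub_left_le (hU : U ∈ unitaryGroup n ℂ)
    (hU' : U' ∈ unitaryGroup n ℂ) (hV : V ∈ unitaryGroup n ℂ) :
    |traceConjPairRe P S U V - traceConjPairRe P S U' V|
      ≤ 2 * frobNorm P * ‖S‖ ^ 2 * frobNorm (U - U') := by
  have hdiff : traceConjPairRe P S U V - traceConjPairRe P S U' V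
      = (P * ((U * S * star U - U' * S * star U') * (V * S * star V))).trace.re := by
    rw [traceConjPairRe, traceConjPairRe, ← Complex.sub_re, ← trace_sub]
    congr 2; noncomm_ring
  rw [hdiff]
  calc _ ≤ frobNorm P * frobNorm ((U * S * star U - U' * S * star U') * (V * S * star V)) :=
        abs_re_trace_mul_le _ _
    _ ≤ frobNorm P * (2 * ‖S‖ * frobNorm (U - U') * ‖V * S * star V‖) := by
        refine mul_le_mul_of_nonneg_left ((frobNorm_mul_le_mul_norm _ _).trans ?_)
          (frobNorm_nonneg P)
        exact mul_le_mul_of_nonneg_right (frobNorm_conj_sub_conj_le hU hU') (norm_nonneg _)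
    _ = 2 * frobNorm P * ‖S‖ ^ 2 * frobNorm (U - U') := by
        rw [norm_conj_of_mem_unitary hV]; ring

lemma abs_traceConjPairRe_sub_right_le (hU : U ∈ unitaryGroup n ℂ)
    (hV : V ∈ unitaryGroup n ℂ) (hV' : V' ∈ unitaryGroup n ℂ) :
    |traceConjPairRe P S U V - traceConjPairRe P S U V'|
      ≤ 2 * frobNorm P * ‖S‖ ^ 2 * frobNorm (V - V') := by
  have hdiff : traceConjPairRe P S U V - traceConjPairRe P S U V'
      = (P * (U * S * star U) * (V * S * star V - V' * S * star V')).trace.re := by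
    rw [traceConjPairRe, traceConjPairRe, ← Complex.sub_re, ← trace_sub, mul_sub]
  rw [hdiff]
  calc _ ≤ frobNorm (P * (U * S * star U)) * frobNorm (V * S * star V - V' * S * star V') :=
        abs_re_trace_mul_le _ _
    _ ≤ frobNorm P * ‖U * S * star U‖ * (2 * ‖S‖ * frobNorm (V - V')) := by
        refine mul_le_mul (frobNorm_mul_le_mul_norm _ _) (frobNorm_conj_sub_conj_le hV hV')
          (frobNorm_nonneg _) (mul_nonneg (frobNorm_nonneg _) (norm_nonneg _))
    _ = 2 * frobNorm P * ‖S‖ ^ 2 * frobNorm (V - V') := by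
        rw [norm_conj_of_mem_unitary hU]; ring

end UnitaryConjugation

theorem trace_conj_two_var_lipschitz_general {d : ℕ}
    (σ : Matrix (Fin d) (Fin d) ℂ) (hσinv : frobNorm σ⁻¹ = 1)
    (S : Matrix (Fin d) (Fin d) ℂ)
    (hSop : ∀ v : Fin d → ℂ, l2Norm (S.mulVec v) ≤ l2Norm v)
    (U U' V V' : Matrix (Fin d) (Fin d) ℂ)
    (hU : U ∈ Matrix.unitaryGroup (Fin d) ℂ) (hU' : U' ∈ Matrix.unitaryGroup (Fin d) ℂ)
    (hV : V ∈ Matrix.unitaryGroup (Fin d) ℂ) (hV' : V' ∈ Matrix.unitaryGroup (Fin d) ℂ) :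
    |((σ⁻¹ * (U * S * star U) * (V * S * star V)).trace).re
        - ((σ⁻¹ * (U' * S * star U') * (V * S * star V)).trace).re|
      ≤ 2 * frobNorm (U - U')
    ∧ |((σ⁻¹ * (U * S * star U) * (V * S * star V)).trace).re
        - ((σ⁻¹ * (U' * S * star U') * (V' * S * star V')).trace).re|
      ≤ 4 * Real.sqrt (frobNorm (U - U') ^ 2 + frobNorm (V - V') ^ 2) := by
  set f := traceConjPairRe σ⁻¹ S
  set a := frobNorm (U - U')
  set b := frobNorm (V - V')
  have hS : ‖S‖ ^ 2 ≤ 1 := pow_le_one₀ (norm_nonneg S) (norm_le_one_of_l2Norm_mulVec_le hSop)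
  have hleft : |f U V - f U' V| ≤ 2 * a := by
    refine (abs_traceConjPairRe_sub_left_le σ⁻¹ hU hU' hV).trans ?_
    rw [hσinv]; nlinarith [frobNorm_nonneg (U - U')]
  have hright : |f U' V - f U' V'| ≤ 2 * b := by
    refine (abs_traceConjPairRe_sub_right_le σ⁻¹ hU' hV hV').trans ?_
    rw [hσinv]; nlinarith [frobNorm_nonneg (V - V')]
  have ha : a ≤ √(a ^ 2 + b ^ 2) := Real.le_sqrt_of_sq_le (le_add_of_nonneg_right (sq_nonneg b))
  have hb : b ≤ √(a ^ 2 + b ^ 2) := Real.le_sqrt_of_sq_le (le_add_of_nonneg_left (sq_nonneg a))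
  refine ⟨hleft, ?_⟩
  calc |f U V - f U' V'| ≤ |f U V - f U' V| + |f U' V - f U' V'| := abs_sub_le _ _ _
    _ ≤ 4 * √(a ^ 2 + b ^ 2) := by linarith

/-- With `σ ≻ 0`, `‖σ⁻¹‖₂ = 1`, `Σ` Hermitian with operator norm at most 1,
the function `f(U,V) = Re tr(σ⁻¹ · UΣU† · VΣV†)` satisfies
`|f(U,V) − f(U',V)| ≤ 2‖U−U'‖₂`, and is 4-Lipschitz in the L₂-sum of
Hilbert–Schmidt metrics. -/
theorem trace_conj_two_var_lipschitz {d : ℕ}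
    (σ : Matrix (Fin d) (Fin d) ℂ) (hσ : σ.PosDef) (hσinv : frobNorm σ⁻¹ = 1)
    (S : Matrix (Fin d) (Fin d) ℂ) (hSherm : S.IsHermitian)
    (hSop : ∀ v : Fin d → ℂ, l2Norm (S.mulVec v) ≤ l2Norm v)
    (U U' V V' : Matrix (Fin d) (Fin d) ℂ)
    (hU : U ∈ Matrix.unitaryGroup (Fin d) ℂ) (hU' : U' ∈ Matrix.unitaryGroup (Fin d) ℂ)
    (hV : V ∈ Matrix.unitaryGroup (Fin d) ℂ) (hV' : V' ∈ Matrix.unitaryGroup (Fin d) ℂ) :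
    |((σ⁻¹ * (U * S * star U) * (V * S * star V)).trace).re
        - ((σ⁻¹ * (U' * S * star U') * (V * S * star V)).trace).re|
      ≤ 2 * frobNorm (U - U')
    ∧ |((σ⁻¹ * (U * S * star U) * (V * S * star V)).trace).re
        - ((σ⁻¹ * (U' * S * star U') * (V' * S * star V')).trace).re|
      ≤ 4 * Real.sqrt (frobNorm (U - U') ^ 2 + frobNorm (V - V') ^ 2) :=
  trace_conj_two_var_lipschitz_general σ hσinv S hSop U U' V V' hU hU' hV hV'
end

section
/- Let ρ = [[A, B],[B†, C]] be a positive semidefinite block matrix where A and C are square blocks. Then tr(A)·tr(C) ≥ ‖B‖₁², where ‖B‖₁ is the trace norm of B. In particular, ‖B‖₁ ≤ tr(ρ)/2. -/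
open Matrix
open scoped ComplexOrder

/-- The matrix square root: equals the psd square root on positive semidefinite
matrices, and junk (`0`) elsewhere. -/
noncomputable def msqrt {n : Type*} [Fintype n] [DecidableEq n]
    (A : Matrix n n ℂ) : Matrix n n ℂ :=
  open scoped Classical in
  if h : A.PosSemidef then
    (h.1.eigenvectorUnitary : Matrix n n ℂ) * diagonal ((↑) ∘ (√·) ∘ h.1.eigenvalues) *
      (star h.1.eigenvectorUnitary : Matrix n n ℂ) else 0

/-- The trace norm (Schatten 1-norm) of a complex matrix: `tr √(BᴴB)`. -/
noncomputable def traceNorm {m n : Type*} [Fintype m] [Fintype n] [DecidableEq n]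
    (B : Matrix m n ℂ) : ℝ :=
  (msqrt (Bᴴ * B)).trace.re

/-! Let `W = B (BᴴB)^{-1/2}`, with the pseudo-inverse on the kernel of `BᴴB`: it is the partial
isometry of the polar decomposition `B = W |B|`, so `‖B‖₁ = Re tr (Wᴴ B)` and `W Wᴴ` is an
orthogonal projection. Compressing `ρ` by the column `[t W; -1]` gives
`t² tr (Wᴴ A W) - 2 t ‖B‖₁ + tr C ≥ 0` for every real `t`, so by the discriminant
`‖B‖₁² ≤ tr (Wᴴ A W) · tr C ≤ tr A · tr C`. -/

namespace Matrix

variable {m k : Type*} [Fintype m] [Fintype k]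

lemma trace_fromBlocks {R : Type*} [AddCommMonoid R] (A : Matrix m m R) (B : Matrix m k R)
    (C : Matrix k m R) (D : Matrix k k R) :
    (fromBlocks A B C D).trace = A.trace + D.trace := by
  simp [trace, Fintype.sum_sum_type]

lemma PosSemidef.re_trace_nonneg {A : Matrix m m ℂ} (hA : A.PosSemidef) : 0 ≤ A.trace.re :=
  (Complex.nonneg_iff.mp hA.trace_nonneg).1

lemma re_trace_conjTranspose (A : Matrix m m ℂ) : Aᴴ.trace.re = A.trace.re := by
  rw [trace_conjTranspose, Complex.star_def, Complex.conj_re]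

lemma cfc_mul_cfc [DecidableEq m] (f g : ℝ → ℝ) (H : Matrix m m ℂ) :
    cfc f H * cfc g H = cfc (fun x => f x * g x) H :=
  (cfc_mul f g H (H.finite_real_spectrum.continuousOn f)
    (H.finite_real_spectrum.continuousOn g)).symm

lemma msqrt_eq_cfc_sqrt [DecidableEq m] {A : Matrix m m ℂ} (hA : A.PosSemidef) :
    msqrt A = cfc Real.sqrt A := by
  rw [msqrt, dif_pos hA, hA.1.cfc_eq]
  rfl

lemma PosSemidef.two_mul_re_trace_le [DecidableEq k] {A : Matrix m m ℂ} {B : Matrix m k ℂ}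
    {C : Matrix k k ℂ} (hρ : (fromBlocks A B Bᴴ C).PosSemidef) (X : Matrix k m ℂ) :
    2 * (X * B).trace.re ≤ (X * A * Xᴴ).trace.re + C.trace.re := by
  let T : Matrix (m ⊕ k) k ℂ := fromRows Xᴴ (-1)
  have hT := hρ.conjTranspose_mul_mul_same T
  have e : Tᴴ * fromBlocks A B Bᴴ C * T = X * A * Xᴴ - X * B - (X * B)ᴴ + C := by
    simp only [T, conjTranspose_fromRows_eq_fromCols_conjTranspose, fromCols_mul_fromBlocks,
      fromCols_mul_fromRows, conjTranspose_conjTranspose, conjTranspose_neg, conjTranspose_one,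
      conjTranspose_mul, Matrix.mul_neg, Matrix.neg_mul, Matrix.mul_one, Matrix.one_mul,
      Matrix.add_mul]
    abel
  rw [e] at hT
  have hnonneg := hT.re_trace_nonneg
  simp only [trace_add, trace_sub, Complex.add_re, Complex.sub_re, re_trace_conjTranspose]
    at hnonneg
  linarith

lemma PosSemidef.re_trace_mul_sq_le [DecidableEq k] {A : Matrix m m ℂ} {B : Matrix m k ℂ}
    {C : Matrix k k ℂ} (hρ : (fromBlocks A B Bᴴ C).PosSemidef) (X : Matrix k m ℂ) :
    (X * B).trace.re ^ 2 ≤ (X * A * Xᴴ).trace.re * C.trace.re := by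
  have hquad : ∀ t : ℝ,
      0 ≤ (X * A * Xᴴ).trace.re * (t * t) + (-2 * (X * B).trace.re) * t + C.trace.re := by
    intro t
    have ht := hρ.two_mul_re_trace_le (t • X)
    simp only [Matrix.smul_mul, conjTranspose_smul, star_trivial, Matrix.mul_smul, trace_smul,
      Complex.smul_re, smul_eq_mul] at ht
    nlinarith
  have hdiscr := discrim_le_zero hquad
  rw [discrim] at hdiscr
  nlinarith

lemma PosSemidef.re_trace_conjTranspose_mul_mul_le [DecidableEq m] {A : Matrix m m ℂ}
    (hA : A.PosSemidef) {W : Matrix m k ℂ} (hW : IsIdempotentElem (W * Wᴴ)) :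
    (Wᴴ * A * W).trace.re ≤ A.trace.re := by
  set Q := 1 - W * Wᴴ
  have hQ : Qᴴ = Q := by simp [Q, conjTranspose_sub, conjTranspose_mul]
  have hcompl : (Qᴴ * A * Q).trace = A.trace - (Wᴴ * A * W).trace := by
    rw [hQ, trace_mul_cycle, trace_mul_comm, hW.one_sub.eq, Matrix.mul_sub, Matrix.mul_one,
      trace_sub, trace_mul_cycle, trace_mul_comm]
  have hnonneg := (hA.conjTranspose_mul_mul_same Q).re_trace_nonneg
  rw [hcompl, Complex.sub_re] at hnonneg
  linarith

lemma exists_partialIsometry_conjTranspose_mul_eq_msqrt [DecidableEq k] (B : Matrix m k ℂ) :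
    ∃ W : Matrix m k ℂ, IsIdempotentElem (W * Wᴴ) ∧ Wᴴ * B = msqrt (Bᴴ * B) := by
  set H := Bᴴ * B
  have hH : IsSelfAdjoint H := isHermitian_conjTranspose_mul_self B
  -- `(√x)⁻¹ = 0` for `x ≤ 0`, so `G` is the pseudo-inverse of `√H` and the scalar identities
  -- below hold for every real `x`.
  set G := cfc (fun x => (√x)⁻¹) H
  have hG : Gᴴ = G := IsSelfAdjoint.cfc.star_eq
  have hGH : G * H = cfc Real.sqrt H := by
    conv_lhs => rw [← cfc_id' ℝ H hH]
    rw [cfc_mul_cfc]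
    congr with x
    rw [inv_mul_eq_div, Real.div_sqrt]
  have hW : B * G * (B * G)ᴴ * (B * G) = B * G := by
    calc B * G * (B * G)ᴴ * (B * G) = B * (G * (G * H * G)) := by
          simp only [H, conjTranspose_mul, hG, Matrix.mul_assoc]
      _ = B * G := by
          rw [hGH, cfc_mul_cfc, cfc_mul_cfc]
          congr with x
          simpa [mul_assoc] using mul_inv_mul_cancel (√x)⁻¹
  refine ⟨B * G, ?_, ?_⟩
  · rw [IsIdempotentElem, ← Matrix.mul_assoc, hW]
  · rw [conjTranspose_mul, hG, Matrix.mul_assoc, hGH,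
      msqrt_eq_cfc_sqrt (posSemidef_conjTranspose_mul_self B)]

end Matrix

/-- For a positive semidefinite block matrix `ρ = [[A,B],[Bᴴ,C]]`,
`tr(A)·tr(C) ≥ ‖B‖₁²`; in particular `‖B‖₁ ≤ tr(ρ)/2`. -/
theorem psd_block_traceNorm {m k : ℕ}
    (A : Matrix (Fin m) (Fin m) ℂ) (B : Matrix (Fin m) (Fin k) ℂ)
    (C : Matrix (Fin k) (Fin k) ℂ)
    (hρ : (Matrix.fromBlocks A B Bᴴ C).PosSemidef) :
    traceNorm B ^ 2 ≤ A.trace.re * C.trace.re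
    ∧ traceNorm B ≤ (Matrix.fromBlocks A B Bᴴ C).trace.re / 2 := by
  have hA : A.PosSemidef := hρ.submatrix Sum.inl
  have hC : C.PosSemidef := hρ.submatrix Sum.inr
  obtain ⟨W, hW, hWB⟩ := exists_partialIsometry_conjTranspose_mul_eq_msqrt B
  have hsq : traceNorm B ^ 2 ≤ A.trace.re * C.trace.re :=
    calc traceNorm B ^ 2 = (Wᴴ * B).trace.re ^ 2 := by rw [traceNorm, hWB]
      _ ≤ (Wᴴ * A * W).trace.re * C.trace.re := by
          simpa using hρ.re_trace_mul_sq_le Wᴴ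
      _ ≤ A.trace.re * C.trace.re :=
          mul_le_mul_of_nonneg_right (hA.re_trace_conjTranspose_mul_mul_le hW) hC.re_trace_nonneg
  refine ⟨hsq, ?_⟩
  rw [trace_fromBlocks, Complex.add_re]
  nlinarith [hA.re_trace_nonneg, hC.re_trace_nonneg, sq_nonneg (A.trace.re - C.trace.re)]
end
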